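/- arXiv:1811.06489 — 3 statements merged into one kernel-verified Lean document; each statement's English description precedes it below -/
import Mathlib

section
/- Let A = { y ∈ 2^ω : ∃n (y starts with 0^n⌢111) } and B its complement in 2^ω, and let x = 0^ω. Then d^μ_B(x) = 3/4 (so it lies strictly between 0 and 1), and x is an I_μ-shift density point of B: for every Borel set C with μ(C) ≥ 1/2 and every n, we have μ(σ_{0^n}(C) ∩ B) > 0. -/
open MeasureTheory Filter Set
open scoped ENNReal

noncomputable section

/-- The restriction `x↾n` of `x : ℕ → α` to its first `n` values, as a list. -/
def res {α : Type*} (x : ℕ → α) (n : ℕ) : List α := List.ofFn (fun i : Fin n => x i)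

/-- The basic clopen cylinder `N_s` of all extensions of the finite string `s`. -/
def Cyl {α : Type*} (s : List α) : Set (ℕ → α) := {x | res x s.length = s}

/-- The shift `σ_s : y ↦ s⌢y` by the finite string `s`. -/
def shiftMap {α : Type*} (s : List α) (x : ℕ → α) : ℕ → α :=
  fun n => if h : n < s.length then s.get ⟨n, h⟩ else x (n - s.length)

/-- The lower density `d^μ_A(x) = liminf_n μ(A ∩ N_{x↾n}) / μ(N_{x↾n})`. -/
def dLower (μ : Measure (ℕ → Bool)) (A : Set (ℕ → Bool)) (x : ℕ → Bool) : ℝ≥0∞ :=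
  Filter.liminf (fun n => μ (A ∩ Cyl (res x n)) / μ (Cyl (res x n))) Filter.atTop


/-- The set `A = { y : ∃n, y starts with 0^n⌢111 }`. -/
def A0 : Set (ℕ → Bool) :=
  {y | ∃ n : ℕ, (∀ i < n, y i = false) ∧ y n = true ∧ y (n + 1) = true ∧ y (n + 2) = true}


lemma res_length {α : Type*} (x : ℕ → α) (n : ℕ) : (res x n).length = n := by
  simp [res]

lemma mem_Cyl {α : Type*} (s : List α) (x : ℕ → α) :
    x ∈ Cyl s ↔ ∀ i (h : i < s.length), x i = s.get ⟨i, h⟩ := by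
  constructor
  · intro H i h
    have H' : res x s.length = s := H
    rw [List.get_of_eq H'.symm ⟨i, h⟩]
    simp [res]
  · intro H
    show res x s.length = s
    apply List.ext_get (by simp [res])
    intro i h1 h2
    simpa [res] using (H i h2)

lemma measurable_Cyl (s : List Bool) : MeasurableSet (Cyl s) := by
  have : Cyl s = ⋂ (i : Fin s.length), {x : ℕ → Bool | x i = s.get i} := by
    ext x
    simp only [mem_iInter, mem_Cyl, mem_setOf_eq]
    exact ⟨fun H i => H i i.2, fun H i h => H ⟨i, h⟩⟩
  rw [this]
  exact MeasurableSet.iInter fun i =>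
    (measurable_pi_apply (i : ℕ)) (MeasurableSet.singleton _)

/-- The cylinders as a family of sets. -/
def CylSets : Set (Set (ℕ → Bool)) := {t | ∃ s : List Bool, t = Cyl s}

lemma coord_eq_union (i : ℕ) (b : Bool) :
    {x : ℕ → Bool | x i = b} = ⋃ (v : Fin i → Bool), Cyl (List.ofFn v ++ [b]) := by
  ext x
  simp only [mem_setOf_eq, mem_iUnion]
  constructor
  · intro hx
    refine ⟨fun j => x j, ?_⟩
    rw [mem_Cyl]
    intro k hk
    simp only [List.length_append, List.length_ofFn, List.length_singleton] at hk
    rcases Nat.lt_or_ge k i with h | h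
    · rw [List.get_eq_getElem, List.getElem_append_left]
      · simp [h]
      · simpa using h
    · have hk' : k = i := by omega
      subst hk'
      rw [List.get_eq_getElem]
      rw [List.getElem_append_right (by simp)]
      simp [hx]
  · rintro ⟨v, hv⟩
    rw [mem_Cyl] at hv
    have h : i < (List.ofFn v ++ [b]).length := by simp
    have := hv i h
    rw [List.get_eq_getElem, List.getElem_append_right (by simp)] at this
    simpa using this

lemma coord_gen (i : ℕ) (b : Bool) :
    MeasurableSet[MeasurableSpace.generateFrom CylSets] {x : ℕ → Bool | x i = b} := by
  rw [coord_eq_union]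
  exact MeasurableSet.iUnion fun v =>
    MeasurableSpace.measurableSet_generateFrom ⟨_, rfl⟩

lemma pi_eq_generateFrom_cyl :
    (inferInstance : MeasurableSpace (ℕ → Bool)) = MeasurableSpace.generateFrom CylSets := by
  apply le_antisymm
  · refine iSup_le fun i => ?_
    rintro t ⟨u, -, rfl⟩
    have : (fun x : ℕ → Bool => x i) ⁻¹' u = ⋃ b ∈ u, {x : ℕ → Bool | x i = b} := by
      ext x
      simp only [mem_preimage, mem_iUnion, mem_setOf_eq]
      exact ⟨fun h => ⟨x i, h, rfl⟩, by rintro ⟨b, hb, rfl⟩; exact hb⟩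
    rw [this]
    exact MeasurableSet.biUnion u.to_countable fun b _ => coord_gen i b
  · rw [MeasurableSpace.generateFrom_le_iff]
    rintro t ⟨s, rfl⟩
    exact measurable_Cyl s

lemma Cyl_nil : Cyl ([] : List Bool) = univ := by
  ext x; simp [Cyl, res]

lemma isPiSystem_cyl : IsPiSystem CylSets := by
  rintro t1 ⟨s, rfl⟩ t2 ⟨t, rfl⟩ hne
  obtain ⟨x, hxs, hxt⟩ := hne
  rw [mem_Cyl] at hxs hxt
  rcases le_total s.length t.length with h | h
  · refine ⟨t, ?_⟩
    apply Set.eq_of_subset_of_subset inter_subset_right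
    intro y hy
    rw [mem_Cyl] at hy
    refine ⟨(mem_Cyl _ _).2 fun i hi => ?_, (mem_Cyl _ _).2 hy⟩
    rw [← hxs i hi, hxt i (lt_of_lt_of_le hi h), hy i (lt_of_lt_of_le hi h)]
  · refine ⟨s, ?_⟩
    apply Set.eq_of_subset_of_subset inter_subset_left
    intro y hy
    rw [mem_Cyl] at hy
    refine ⟨(mem_Cyl _ _).2 hy, (mem_Cyl _ _).2 fun i hi => ?_⟩
    rw [← hxt i hi, hxs i (lt_of_lt_of_le hi h), hy i (lt_of_lt_of_le hi h)]

lemma measure_ext_cyl (ν₁ ν₂ : Measure (ℕ → Bool)) [IsFiniteMeasure ν₁]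
    (h : ∀ s : List Bool, ν₁ (Cyl s) = ν₂ (Cyl s)) : ν₁ = ν₂ := by
  refine ext_of_generate_finite CylSets pi_eq_generateFrom_cyl isPiSystem_cyl ?_ ?_
  · rintro t ⟨s, rfl⟩; exact h s
  · rw [← Cyl_nil]; exact h []

/-- The cylinder `0^k 111`. -/
def D (k : ℕ) : Set (ℕ → Bool) := Cyl (List.replicate k false ++ List.replicate 3 true)

lemma getD (k i : ℕ) (h : i < (List.replicate k false ++ List.replicate 3 true).length) :
    (List.replicate k false ++ List.replicate 3 true)[i] = decide (k ≤ i) := by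
  rw [List.getElem_append]
  split
  · rename_i h'
    simp only [List.length_replicate] at h'
    simp [List.getElem_replicate, Nat.not_le.2 h']
  · rename_i h'
    simp only [List.length_replicate] at h'
    rw [List.getElem_replicate]
    simp [Nat.not_lt.1 h']

lemma mem_D (k : ℕ) (y : ℕ → Bool) :
    y ∈ D k ↔ (∀ i < k, y i = false) ∧ y k = true ∧ y (k+1) = true ∧ y (k+2) = true := by
  rw [D, mem_Cyl]
  simp only [List.get_eq_getElem, getD, List.length_append, List.length_replicate]
  constructor
  · intro H
    refine ⟨fun i hi => ?_, ?_, ?_, ?_⟩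
    · simpa [Nat.not_le.2 hi] using H i (by omega)
    · simpa using H k (by omega)
    · simpa using H (k+1) (by omega)
    · simpa using H (k+2) (by omega)
  · rintro ⟨h0, h1, h2, h3⟩ i hi
    rcases Nat.lt_or_ge i k with h | h
    · simp [h0 i h, Nat.not_le.2 h]
    · have : i = k ∨ i = k + 1 ∨ i = k + 2 := by omega
      rcases this with rfl | rfl | rfl <;> simp [h1, h2, h3, h]

lemma res_zero (n : ℕ) : res (fun _ => false) n = List.replicate n false := by
  apply List.ext_getElem (by simp [res])
  intro i h1 h2
  simp [res]

lemma mem_Cyl_rep (n : ℕ) (y : ℕ → Bool) :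
    y ∈ Cyl (List.replicate n false) ↔ ∀ i < n, y i = false := by
  rw [mem_Cyl]
  simp [List.getElem_replicate]

lemma A0_eq : A0 = ⋃ k, D k := by
  ext y
  simp only [A0, mem_setOf_eq, mem_iUnion, mem_D]

lemma measurable_A0 : MeasurableSet A0 := by
  rw [A0_eq]; exact MeasurableSet.iUnion fun k => measurable_Cyl _

lemma A0_inter (n : ℕ) :
    A0 ∩ Cyl (List.replicate n false) = ⋃ j, D (n + j) := by
  ext y
  simp only [mem_inter_iff, A0, mem_setOf_eq, mem_Cyl_rep, mem_iUnion, mem_D]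
  constructor
  · rintro ⟨⟨k, hk0, hk1, hk2, hk3⟩, hn⟩
    have hkn : n ≤ k := by
      by_contra h
      push_neg at h
      rw [hn k h] at hk1
      exact Bool.false_ne_true hk1
    refine ⟨k - n, ?_⟩
    rw [Nat.add_sub_cancel' hkn]
    exact ⟨hk0, hk1, hk2, hk3⟩
  · rintro ⟨j, h0, h1, h2, h3⟩
    exact ⟨⟨n + j, h0, h1, h2, h3⟩, fun i hi => h0 i (by omega)⟩

lemma D_disj : Pairwise (Function.onFun Disjoint D) := by
  intro k l hkl
  rw [Function.onFun, Set.disjoint_left]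
  intro y hyk hyl
  rw [mem_D] at hyk hyl
  rcases Nat.lt_or_gt_of_ne hkl with h | h
  · rw [hyl.1 k h] at hyk
    exact Bool.false_ne_true hyk.2.1
  · rw [hyk.1 l h] at hyl
    exact Bool.false_ne_true hyl.2.1

lemma half_pow_ne_top (n : ℕ) : ((1:ℝ≥0∞)/2)^n ≠ ⊤ := by
  exact ENNReal.pow_ne_top (by simp)

lemma half_pow_ne_zero (n : ℕ) : ((1:ℝ≥0∞)/2)^n ≠ 0 := by
  apply pow_ne_zero
  simp [ENNReal.div_eq_zero_iff]

lemma tsum_half (n : ℕ) : ∑' j : ℕ, ((1:ℝ≥0∞)/2)^(n+j+3) = (1/2)^(n+2) := by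
  have h : ∀ j:ℕ, ((1:ℝ≥0∞)/2)^(n+j+3) = (1/2)^(n+3) * (1/2)^j := fun j => by ring
  rw [tsum_congr h, ENNReal.tsum_mul_left, ENNReal.tsum_geometric]
  have h1 : (1:ℝ≥0∞) - 1/2 = 1/2 := by rw [one_div, ENNReal.one_sub_inv_two]
  have h2 : ((1:ℝ≥0∞)/2)⁻¹ = 2 := by simp [ENNReal.inv_div]
  rw [h1, h2, pow_succ, mul_assoc]
  have : ((1:ℝ≥0∞)/2) * 2 = 1 := by
    rw [ENNReal.div_mul_cancel] <;> norm_num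
  rw [this, mul_one]

section MeasureComp

variable {μ : Measure (ℕ → Bool)}
  (hμ : ∀ s : List Bool, μ (Cyl s) = (1 / 2 : ℝ≥0∞) ^ s.length)

include hμ

lemma mu_D (k : ℕ) : μ (D k) = (1/2)^(k+3) := by
  rw [D, hμ]
  simp

lemma mu_A0_inter (n : ℕ) :
    μ (A0 ∩ Cyl (List.replicate n false)) = (1/2)^(n+2) := by
  rw [A0_inter, measure_iUnion (f := fun j => D (n + j))
      (fun i j hij => D_disj (show n+i ≠ n+j by omega)) (fun j => measurable_Cyl _)]
  rw [tsum_congr (fun j => mu_D hμ (n+j))]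
  have : ∀ j : ℕ, ((1:ℝ≥0∞)/2)^(n+j+3) = (1/2)^(n+j+3) := fun _ => rfl
  exact tsum_half n

lemma mu_compl_inter (n : ℕ) :
    μ (A0ᶜ ∩ Cyl (List.replicate n false)) = 3/4 * (1/2)^n := by
  have key := measure_inter_add_diff (μ := μ) (Cyl (List.replicate n false)) measurable_A0
  rw [Set.inter_comm (Cyl _) A0, Set.diff_eq, Set.inter_comm (Cyl _) A0ᶜ] at key
  rw [mu_A0_inter hμ, hμ] at key
  simp only [List.length_replicate] at key
  have harith : ((1:ℝ≥0∞)/2)^(n+2) + 3/4 * (1/2)^n = (1/2)^n := by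
    rw [pow_add]
    have h14 : ((1:ℝ≥0∞)/2)^2 = 1/4 := by
      rw [one_div, one_div, sq, ← ENNReal.mul_inv (by norm_num) (by norm_num)]
      norm_num
    rw [h14, mul_comm (((1:ℝ≥0∞)/2)^n) (1/4), ← add_mul]
    have : (1:ℝ≥0∞)/4 + 3/4 = 1 := by
      rw [ENNReal.div_add_div_same]
      norm_num
      rw [ENNReal.div_self] <;> norm_num
    rw [this, one_mul]
  rw [← harith] at key
  exact (ENNReal.add_right_inj (half_pow_ne_top (n+2))).1 key

end MeasureComp

lemma measurable_T (n : ℕ) : Measurable (fun y : ℕ → Bool => fun i => y (n + i)) :=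
  measurable_pi_lambda _ fun i => measurable_pi_apply (n + i)

lemma image_shift (n : ℕ) (C : Set (ℕ → Bool)) :
    shiftMap (res (fun _ => false) n) '' C
      = Cyl (List.replicate n false) ∩ (fun y i => y (n + i)) ⁻¹' C := by
  rw [res_zero]
  ext y
  constructor
  · rintro ⟨x, hx, rfl⟩
    refine ⟨(mem_Cyl_rep n _).2 fun i hi => ?_, ?_⟩
    · simp [shiftMap, hi]
    · have : (fun i => shiftMap (List.replicate n false) x (n + i)) = x := by
        funext i
        simp [shiftMap]
      rw [mem_preimage, this]
      exact hx
  · rintro ⟨hy1, hy2⟩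
    refine ⟨fun i => y (n + i), hy2, ?_⟩
    funext m
    rcases Nat.lt_or_ge m n with h | h
    · simp [shiftMap, h, ((mem_Cyl_rep n y).1 hy1 m h).symm]
    · have h2 : n + (m - n) = m := Nat.add_sub_cancel' h
      simp [shiftMap, Nat.not_lt.2 h, h2]

lemma cyl_append (n : ℕ) (s : List Bool) :
    Cyl (List.replicate n false ++ s)
      = Cyl (List.replicate n false) ∩ (fun y i => y (n + i)) ⁻¹' Cyl s := by
  ext y
  constructor
  · intro H
    rw [mem_Cyl] at H
    simp only [List.get_eq_getElem, List.length_append, List.length_replicate] at H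
    refine ⟨(mem_Cyl_rep n y).2 fun i hi => ?_, ?_⟩
    · have := H i (by omega)
      rwa [List.getElem_append, dif_pos (by simpa using hi), List.getElem_replicate] at this
    · rw [mem_preimage, mem_Cyl]
      intro j hj
      have := H (n + j) (by omega)
      rw [List.getElem_append_right (by simp)] at this
      simp only [List.get_eq_getElem]
      simpa using this
  · rintro ⟨h1, h2⟩
    rw [mem_Cyl_rep] at h1
    rw [mem_preimage, mem_Cyl] at h2
    rw [mem_Cyl]
    intro i hi
    simp only [List.get_eq_getElem, List.length_append, List.length_replicate] at hi ⊢
    rw [List.getElem_append]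
    split
    · rename_i h'
      simp only [List.length_replicate] at h'
      rw [List.getElem_replicate]
      exact h1 i h'
    · rename_i h'
      simp only [List.length_replicate] at h'
      have hin : n ≤ i := Nat.not_lt.1 h'
      have := h2 (i - n) (by omega)
      rw [Nat.add_sub_cancel' hin] at this
      simpa using this

/-- With `B = Aᶜ` and `x = 0^ω`: `d^μ_B(x) = 3/4` and `x` is an `I_μ`-shift density point
of `B`: for every Borel set `C` with `μ(C) ≥ 1/2` and every `n`,
`μ(σ_{0^n}(C) ∩ B) > 0`. -/
theorem stmt2 (μ : Measure (ℕ → Bool))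
    (hμ : ∀ s : List Bool, μ (Cyl s) = (1 / 2 : ℝ≥0∞) ^ s.length) :
    dLower μ A0ᶜ (fun _ => false) = 3 / 4 ∧
      ∀ C : Set (ℕ → Bool), MeasurableSet C → (1 / 2 : ℝ≥0∞) ≤ μ C →
        ∀ n : ℕ, 0 < μ (shiftMap (res (fun _ => false) n) '' C ∩ A0ᶜ) := by
  haveI : IsFiniteMeasure μ := ⟨by rw [← Cyl_nil, hμ]; simp⟩
  constructor
  · have key : ∀ n : ℕ, μ (A0ᶜ ∩ Cyl (res (fun _ => false) n))
        / μ (Cyl (res (fun _ => false) n)) = 3 / 4 := by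
      intro n
      rw [res_zero, mu_compl_inter hμ, hμ]
      simp only [List.length_replicate]
      rw [mul_div_assoc,
        ENNReal.div_self (half_pow_ne_zero n) (half_pow_ne_top n), mul_one]
    unfold dLower
    rw [funext key, Filter.liminf_const]
  · intro C hC hCge n
    set T : (ℕ → Bool) → ℕ → Bool := fun y i => y (n + i) with hT
    have himg : shiftMap (res (fun _ => false) n) '' C
        = Cyl (List.replicate n false) ∩ T ⁻¹' C := image_shift n C
    set ν : Measure (ℕ → Bool) := (μ.restrict (Cyl (List.replicate n false))).map T with hν
    have hνcyl : ∀ s : List Bool, ν (Cyl s) = (((1:ℝ≥0∞)/2)^n • μ) (Cyl s) := by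
      intro s
      rw [hν, Measure.map_apply (measurable_T n) (measurable_Cyl s),
        Measure.restrict_apply ((measurable_T n) (measurable_Cyl s)),
        inter_comm, ← cyl_append n s, hμ, Measure.smul_apply, smul_eq_mul, hμ s]
      simp only [List.length_append, List.length_replicate]
      rw [pow_add]
    have hνμ : ν = ((1:ℝ≥0∞)/2)^n • μ := measure_ext_cyl _ _ hνcyl
    have himgC : μ (shiftMap (res (fun _ => false) n) '' C) = (1/2)^n * μ C := by
      rw [himg]
      have h1 : μ (Cyl (List.replicate n false) ∩ T ⁻¹' C) = ν C := by
        rw [hν, Measure.map_apply (measurable_T n) hC,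
          Measure.restrict_apply ((measurable_T n) hC), inter_comm]
      rw [h1, hνμ]
      simp [Measure.smul_apply, smul_eq_mul]
    by_contra hcon
    push_neg at hcon
    have h0 : μ (shiftMap (res (fun _ => false) n) '' C ∩ A0ᶜ) = 0 :=
      le_antisymm hcon zero_le
    have hle : μ (shiftMap (res (fun _ => false) n) '' C) ≤ (1/2)^(n+2) := by
      calc μ (shiftMap (res (fun _ => false) n) '' C)
          = μ (shiftMap (res (fun _ => false) n) '' C ∩ A0
              ∪ shiftMap (res (fun _ => false) n) '' C ∩ A0ᶜ) := by
            rw [Set.inter_union_compl]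
        _ ≤ μ (shiftMap (res (fun _ => false) n) '' C ∩ A0)
              + μ (shiftMap (res (fun _ => false) n) '' C ∩ A0ᶜ) := measure_union_le _ _
        _ = μ (shiftMap (res (fun _ => false) n) '' C ∩ A0) := by rw [h0, add_zero]
        _ ≤ μ (A0 ∩ Cyl (List.replicate n false)) := by
            apply measure_mono
            rw [himg]
            rintro y ⟨⟨hy1, -⟩, hy2⟩
            exact ⟨hy2, hy1⟩
        _ = (1/2)^(n+2) := mu_A0_inter hμ n
    have hge : ((1:ℝ≥0∞)/2)^(n+1) ≤ μ (shiftMap (res (fun _ => false) n) '' C) := by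
      rw [himgC, pow_succ]
      exact mul_le_mul_right hCge _
    have hlt : ((1:ℝ≥0∞)/2)^(n+2) < (1/2)^(n+1) := by
      have h12 : ((1:ℝ≥0∞)/2) < 1 := by
        rw [one_div]
        exact ENNReal.inv_lt_one.2 (by norm_num)
      calc ((1:ℝ≥0∞)/2)^(n+2) = (1/2)^(n+1) * (1/2) := by ring
        _ < (1/2)^(n+1) * 1 :=
            (ENNReal.mul_lt_mul_iff_right (half_pow_ne_zero (n+1)) (half_pow_ne_top (n+1))).2 h12
        _ = (1/2)^(n+1) := mul_one _
    exact absurd (hge.trans hle) (not_le.2 hlt)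
end
end

section
/- Let I be an ideal on ω^Ω and D : Borel(ω^Ω) → Borel(ω^Ω) a map such that A △ B ∈ I implies D(A) = D(B). If D is I-compatible (A \ B ∈ I ⟹ D(A) \ D(B) ∈ I, and A ∩ B ∈ I ⟹ D(A) ∩ D(B) ∈ I) and I-positive (D(A) ∩ A ∉ I whenever A ∉ I), then D(A) △ A ∈ I for every Borel set A; and conversely. -/
/-! The density property makes `D A` interchangeable with `A` modulo `I`, and `I`-compatibility
and `I`-positivity are invariant under such replacements. Conversely, positivity applied to
`A \ D A`, whose image lies in `D A` modulo `I` by compatibility, gives `A ⊆_I D A`; applied to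
`Aᶜ` and combined with `D A ⊥_I D Aᶜ`, this gives `D A ⊆_I A`. -/

open Set

section IdealEquivalence

variable {α : Type*} {I : Set (Set α)}

theorem sdiff_mem_of_symmDiff_mem (hI : IsLowerSet I) (hI' : SupClosed I) {A A' B B' : Set α}
    (hA : symmDiff A' A ∈ I) (hB : symmDiff B' B ∈ I) (hAB : A \ B ∈ I) : A' \ B' ∈ I := by
  refine hI (fun x hx => ?_) (hI' (hI' hA hAB) hB)
  simp only [sup_eq_union, mem_union, mem_sdiff, mem_symmDiff] at hx ⊢
  tauto

theorem inter_mem_of_symmDiff_mem (hI : IsLowerSet I) (hI' : SupClosed I) {A A' B B' : Set α}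
    (hA : symmDiff A' A ∈ I) (hB : symmDiff B' B ∈ I) (hAB : A ∩ B ∈ I) : A' ∩ B' ∈ I := by
  refine hI (fun x hx => ?_) (hI' (hI' hA hAB) hB)
  simp only [sup_eq_union, mem_union, mem_inter_iff, mem_symmDiff] at hx ⊢
  tauto

theorem inter_notMem_of_symmDiff_mem (hI : IsLowerSet I) (hI' : SupClosed I) {A A' : Set α}
    (hA : symmDiff A' A ∈ I) (hAI : A ∉ I) : A' ∩ A ∉ I := fun hA'A =>
  hAI <| hI (fun x hx => by
    simp only [sup_eq_union, mem_union, mem_inter_iff, mem_symmDiff] at hx ⊢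
    tauto) (hI' hA hA'A)

end IdealEquivalence

section Density

variable {α : Type*} [MeasurableSpace α] {I : Set (Set α)} {D : Set α → Set α}

theorem diff_apply_mem_of_positive (hempty : ∅ ∈ I) (hI : IsLowerSet I)
    (hDval : ∀ A, MeasurableSet A → MeasurableSet (D A))
    (hcompat_sdiff : ∀ A B, MeasurableSet A → MeasurableSet B → A \ B ∈ I → D A \ D B ∈ I)
    (hpos : ∀ A, MeasurableSet A → A ∉ I → D A ∩ A ∉ I) {A : Set α} (hA : MeasurableSet A) :
    A \ D A ∈ I := by
  by_contra hAD
  have hB : MeasurableSet (A \ D A) := hA.diff (hDval A hA)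
  have hBA : D (A \ D A) \ D A ∈ I :=
    hcompat_sdiff _ _ hB hA (by rwa [sdiff_eq_empty.mpr sdiff_subset])
  exact hpos _ hB hAD <| hI (show _ ⊆ D (A \ D A) \ D A from fun x hx => ⟨hx.1, hx.2.2⟩) hBA

theorem apply_diff_mem_of_positive (hempty : ∅ ∈ I) (hI : IsLowerSet I) (hI' : SupClosed I)
    (hDval : ∀ A, MeasurableSet A → MeasurableSet (D A))
    (hcompat : ∀ A B, MeasurableSet A → MeasurableSet B →
      (A \ B ∈ I → D A \ D B ∈ I) ∧ (A ∩ B ∈ I → D A ∩ D B ∈ I))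
    (hpos : ∀ A, MeasurableSet A → A ∉ I → D A ∩ A ∉ I) {A : Set α} (hA : MeasurableSet A) :
    D A \ A ∈ I := by
  have hdisj : D A ∩ D Aᶜ ∈ I :=
    (hcompat A Aᶜ hA hA.compl).2 (by rwa [inter_compl_self])
  have hcompl : Aᶜ \ D Aᶜ ∈ I :=
    diff_apply_mem_of_positive hempty hI hDval (fun A B hA hB => (hcompat A B hA hB).1) hpos
      hA.compl
  refine hI (fun x hx => ?_) (hI' hdisj hcompl)
  by_cases h : x ∈ D Aᶜ
  · exact Or.inl ⟨hx.1, h⟩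
  · exact Or.inr ⟨hx.2, h⟩

end Density

theorem stmt5_general {Ω : Type*} [MeasurableSpace Ω] (I : Set (Set (ℕ → Ω)))
    (hempty : ∅ ∈ I)
    (hdown : ∀ A B : Set (ℕ → Ω), A ∈ I → B ⊆ A → B ∈ I)
    (hunion : ∀ A B : Set (ℕ → Ω), A ∈ I → B ∈ I → A ∪ B ∈ I)
    (D : Set (ℕ → Ω) → Set (ℕ → Ω))
    (hDval : ∀ A : Set (ℕ → Ω), MeasurableSet A → MeasurableSet (D A)) :
    ((∀ A B : Set (ℕ → Ω), MeasurableSet A → MeasurableSet B →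
        ((A \ B ∈ I → D A \ D B ∈ I) ∧ (A ∩ B ∈ I → D A ∩ D B ∈ I))) ∧
      (∀ A : Set (ℕ → Ω), MeasurableSet A → A ∉ I → D A ∩ A ∉ I)) ↔
    (∀ A : Set (ℕ → Ω), MeasurableSet A → symmDiff (D A) A ∈ I) := by
  have hI : IsLowerSet I := fun _ _ hBA hA => hdown _ _ hA hBA
  have hI' : SupClosed I := fun _ hA _ hB => hunion _ _ hA hB
  constructor
  · rintro ⟨hcompat, hpos⟩ A hA
    exact hI' (apply_diff_mem_of_positive hempty hI hI' hDval hcompat hpos hA)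
      (diff_apply_mem_of_positive hempty hI hDval (fun A B hA hB => (hcompat A B hA hB).1)
        hpos hA)
  · intro hdens
    exact ⟨fun A B hA hB =>
        ⟨sdiff_mem_of_symmDiff_mem hI hI' (hdens A hA) (hdens B hB),
          inter_mem_of_symmDiff_mem hI hI' (hdens A hA) (hdens B hB)⟩,
      fun A hA => inter_notMem_of_symmDiff_mem hI hI' (hdens A hA)⟩

/-- If `I` is an ideal on `ω^Ω` and `D` is a map on Borel sets that is invariant under
`I`-equivalence (`A △ B ∈ I ⟹ D(A) = D(B)`), then `D` is `I`-compatible and `I`-positive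
if and only if the density property `D(A) △ A ∈ I` holds for all Borel sets `A`. -/
theorem stmt5 {Ω : Type*} [MeasurableSpace Ω] (I : Set (Set (ℕ → Ω)))
    (hempty : ∅ ∈ I)
    (hdown : ∀ A B : Set (ℕ → Ω), A ∈ I → B ⊆ A → B ∈ I)
    (hunion : ∀ A B : Set (ℕ → Ω), A ∈ I → B ∈ I → A ∪ B ∈ I)
    (D : Set (ℕ → Ω) → Set (ℕ → Ω))
    (hDval : ∀ A : Set (ℕ → Ω), MeasurableSet A → MeasurableSet (D A))
    (hlift : ∀ A B : Set (ℕ → Ω), MeasurableSet A → MeasurableSet B →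
      symmDiff A B ∈ I → D A = D B) :
    ((∀ A B : Set (ℕ → Ω), MeasurableSet A → MeasurableSet B →
        ((A \ B ∈ I → D A \ D B ∈ I) ∧ (A ∩ B ∈ I → D A ∩ D B ∈ I))) ∧
      (∀ A : Set (ℕ → Ω), MeasurableSet A → A ∉ I → D A ∩ A ∉ I)) ↔
    (∀ A : Set (ℕ → Ω), MeasurableSet A → symmDiff (D A) A ∈ I) :=
  stmt5_general I hempty hdown hunion D hDval
end

section
/- Let P be a collection of perfect subtrees of Ω^{<ω} closed under restriction (T_s ∈ P for T ∈ P, s ∈ T) and containing the full tree. For any T ∈ P, the set [T] of branches is not in I*_P; i.e., there is no S ≤ T with [S] ∈ I_P. -/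
open Set

noncomputable section

/-- A (set-theoretic) tree on `α`: a collection of finite sequences closed under
initial segments. -/
def IsTree {α : Type*} (T : Set (List α)) : Prop :=
  ∀ s ∈ T, ∀ t : List α, t <+: s → t ∈ T

/-- The set `[T]` of branches of a tree `T`. -/
def branches {α : Type*} (T : Set (List α)) : Set (ℕ → α) :=
  {x | ∀ n : ℕ, res x n ∈ T}

/-- A perfect tree: a nonempty tree with a splitting node above every node. -/
def IsPerfectTree {α : Type*} (T : Set (List α)) : Prop :=
  IsTree T ∧ T.Nonempty ∧
    ∀ s ∈ T, ∃ t ∈ T, s <+: t ∧ ∃ a b : α, a ≠ b ∧ t ++ [a] ∈ T ∧ t ++ [b] ∈ T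

/-- A tree forcing: a collection of perfect trees containing the full tree and closed
under restriction `T ↦ T_u`. -/
def IsTreeForcing {α : Type*} (P : Set (Set (List α))) : Prop :=
  (∀ T ∈ P, IsPerfectTree T) ∧ Set.univ ∈ P ∧
    ∀ T ∈ P, ∀ u ∈ T, {t ∈ T | u <+: t ∨ t <+: u} ∈ P

/-- `A` is `P`-nowhere dense. -/
def PNwd {α : Type*} (P : Set (Set (List α))) (A : Set (ℕ → α)) : Prop :=
  ∀ T ∈ P, ∃ S ∈ P, S ⊆ T ∧ branches S ∩ A = ∅

/-- `A` belongs to the σ-ideal `I_P` generated by the `P`-nowhere dense sets. -/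
def PIdeal {α : Type*} (P : Set (Set (List α))) (A : Set (ℕ → α)) : Prop :=
  ∃ f : ℕ → Set (ℕ → α), (∀ n, PNwd P (f n)) ∧ A ⊆ ⋃ n, f n

/-- `A` belongs to the auxiliary ideal `I*_P`. -/
def PIstar {α : Type*} (P : Set (Set (List α))) (A : Set (ℕ → α)) : Prop :=
  ∀ T ∈ P, ∃ S ∈ P, S ⊆ T ∧ PIdeal P (branches S ∩ A)

/-- `A` is `P`-measurable. -/
def PMeasurable {α : Type*} (P : Set (Set (List α))) (A : Set (ℕ → α)) : Prop :=
  ∀ T ∈ P, ∃ S ∈ P, S ⊆ T ∧ (PIdeal P (branches S \ A) ∨ PIdeal P (branches S ∩ A))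

/-- Compatibility of two conditions in the tree forcing `P`. -/
def Compat {α : Type*} (P : Set (Set (List α))) (S T : Set (List α)) : Prop :=
  ∃ R ∈ P, R ⊆ S ∧ R ⊆ T

/-- `D` is an antichain in the tree forcing `P`. -/
def IsAntichainIn {α : Type*} (P D : Set (Set (List α))) : Prop :=
  D ⊆ P ∧ ∀ S ∈ D, ∀ T ∈ D, S ≠ T → ¬ Compat P S T

/-- `D` is a maximal antichain in the tree forcing `P`. -/
def IsMaxAntichainIn {α : Type*} (P D : Set (Set (List α))) : Prop :=
  IsAntichainIn P D ∧ ∀ T ∈ P, ∃ S ∈ D, Compat P S T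

/-- `s` is the stem of the tree `T`: the longest node comparable with all nodes of `T`. -/
def IsStem {α : Type*} (T : Set (List α)) (s : List α) : Prop :=
  s ∈ T ∧ (∀ t ∈ T, s <+: t ∨ t <+: s) ∧
    ∀ s' ∈ T, (∀ t ∈ T, s' <+: t ∨ t <+: s') → s'.length ≤ s.length

/-!
If `[S] ⊆ ⋃ n, A n` with `S ∈ P` and every `A n` `P`-nowhere dense, shrink `S` step by step:
at stage `n` the current condition is replaced by one avoiding `A n` that still contains a proper
extension of the current node (restricting to that node first makes sure the node survives the
shrinking). The nodes form a strictly increasing chain whose limit is a branch of `S` lying in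
every condition of the sequence, hence outside every `A n`.
-/

section

variable {α : Type*}

namespace IsPerfectTree

variable {T : Set (List α)}

lemma exists_prefix_length_lt (hT : IsPerfectTree T) {s : List α} (hs : s ∈ T) :
    ∃ s' ∈ T, s <+: s' ∧ s.length < s'.length := by
  obtain ⟨t, -, hst, a, -, -, hta, -⟩ := hT.2.2 s hs
  refine ⟨t ++ [a], hta, hst.trans (List.prefix_append t [a]), ?_⟩
  simpa using Nat.lt_succ_of_le hst.length_le

lemma exists_le_length (hT : IsPerfectTree T) (m : ℕ) : ∃ u ∈ T, m ≤ u.length := by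
  induction m with
  | zero => obtain ⟨s, hs⟩ := hT.2.1; exact ⟨s, hs, Nat.zero_le _⟩
  | succ m ih =>
    obtain ⟨u, hu, hm⟩ := ih
    obtain ⟨u', hu', -, hlt⟩ := hT.exists_prefix_length_lt hu
    exact ⟨u', hu', by omega⟩

lemma mem_of_forall_comparable (hT : IsPerfectTree T) {u : List α}
    (hu : ∀ t ∈ T, u <+: t ∨ t <+: u) : u ∈ T := by
  obtain ⟨t, ht, hlen⟩ := hT.exists_le_length u.length
  rcases hu t ht with h | h
  · exact hT.1 t ht u h
  · rwa [← h.eq_of_length_le hlen]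

end IsPerfectTree

lemma branches_mono {S T : Set (List α)} (h : S ⊆ T) : branches S ⊆ branches T :=
  fun _ hx n => h (hx n)

lemma PNwd.exists_subset_prefix_length_lt {P : Set (Set (List α))} (hP : IsTreeForcing P)
    {A : Set (ℕ → α)} (hA : PNwd P A) {S : Set (List α)} (hS : S ∈ P) {s : List α}
    (hs : s ∈ S) :
    ∃ S' ∈ P, S' ⊆ S ∧ branches S' ∩ A = ∅ ∧ ∃ s' ∈ S', s <+: s' ∧ s.length < s'.length := by
  obtain ⟨s', hs', hss', hlen⟩ := (hP.1 S hS).exists_prefix_length_lt hs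
  obtain ⟨S', hS', hsub, hempty⟩ := hA _ (hP.2.2 S hS s' hs')
  have hs'S' : s' ∈ S' := (hP.1 S' hS').mem_of_forall_comparable fun t ht => (hsub ht).2
  exact ⟨S', hS', fun t ht => (hsub ht).1, hempty, s', hs'S', hss', hlen⟩

lemma exists_res_prefix_of_chain {s : ℕ → List α} (hpre : ∀ n, s n <+: s (n + 1))
    (hlen : ∀ n, n ≤ (s n).length) : ∃ x : ℕ → α, ∀ n, res x n <+: s n := by
  have hmono : ∀ ⦃m n⦄, m ≤ n → s m <+: s n := Nat.rel_of_forall_rel_succ_of_le _ hpre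
  refine ⟨fun k => (s (k + 1))[k]'(hlen (k + 1)), fun n => ?_⟩
  rw [List.prefix_iff_eq_take]
  apply List.ext_getElem
  · simpa [res] using hlen n
  · intro i hi _
    simp only [res, List.length_ofFn] at hi
    simpa [res] using (hmono (Nat.succ_le_of_lt hi)).getElem _

lemma exists_mem_branches_of_chain {S : ℕ → Set (List α)} (hS : ∀ n, IsTree (S n))
    (hanti : Antitone S) {s : ℕ → List α} (hs : ∀ n, s n ∈ S n)
    (hpre : ∀ n, s n <+: s (n + 1)) (hlen : ∀ n, (s n).length < (s (n + 1)).length) :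
    ∃ x, ∀ n, x ∈ branches (S n) := by
  have hlen' : ∀ n, n ≤ (s n).length := by
    intro n
    induction n with
    | zero => exact Nat.zero_le _
    | succ n ih => exact Nat.succ_le_of_lt (ih.trans_lt (hlen n))
  obtain ⟨x, hx⟩ := exists_res_prefix_of_chain hpre hlen'
  refine ⟨x, fun n m => ?_⟩
  have hk : res x (max n m) ∈ S n :=
    hS _ _ (hanti (le_max_left n m) (hs _)) _ (hx _)
  have hmk : res x m <+: s (max n m) :=
    (hx m).trans (Nat.rel_of_forall_rel_succ_of_le _ hpre (le_max_right n m))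
  exact hS n _ hk _ (List.prefix_of_prefix_length_le hmk (hx _) (by simp [res]))

lemma not_pIdeal_branches {P : Set (Set (List α))} (hP : IsTreeForcing P) {S : Set (List α)}
    (hS : S ∈ P) : ¬ PIdeal P (branches S) := by
  rintro ⟨A, hA, hcover⟩
  obtain ⟨s₀, hs₀⟩ := (hP.1 S hS).2.1
  let Node := {p : Set (List α) × List α // p.1 ∈ P ∧ p.2 ∈ p.1}
  have step : ∀ n (q : Node), ∃ q' : Node, q'.1.1 ⊆ q.1.1 ∧ branches q'.1.1 ∩ A n = ∅ ∧
      q.1.2 <+: q'.1.2 ∧ q.1.2.length < q'.1.2.length := by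
    rintro n ⟨⟨R, r⟩, hR, hr⟩
    obtain ⟨R', hR', hsub, hempty, r', hr', hpre, hlen⟩ :=
      (hA n).exists_subset_prefix_length_lt hP hR hr
    exact ⟨⟨(R', r'), hR', hr'⟩, hsub, hempty, hpre, hlen⟩
  choose next hsub hempty hpre hlen using step
  let seq : ℕ → Node := fun n => Nat.rec ⟨(S, s₀), hS, hs₀⟩ next n
  obtain ⟨x, hx⟩ := exists_mem_branches_of_chain (S := fun n => (seq n).1.1)
    (fun n => (hP.1 _ (seq n).2.1).1) (antitone_nat_of_succ_le fun n => hsub n (seq n))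
    (fun n => (seq n).2.2) (fun n => hpre n (seq n)) (fun n => hlen n (seq n))
  obtain ⟨_, ⟨n, rfl⟩, hxn⟩ := hcover (hx 0)
  exact (hempty n (seq n)).subset ⟨hx (n + 1), hxn⟩

end

/-- For any tree forcing `P` and any `T ∈ P`, the branch set `[T]` is not in `I*_P`;
i.e. there is no `S ≤ T` with `[S] ∈ I_P`. -/
theorem stmt6 {α : Type*} (P : Set (Set (List α))) (hP : IsTreeForcing P)
    (T : Set (List α)) (hT : T ∈ P) :
    ¬ PIstar P (branches T) ∧ ∀ S ∈ P, S ⊆ T → ¬ PIdeal P (branches S) := by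
  refine ⟨fun hstar => ?_, fun S hS _ => not_pIdeal_branches hP hS⟩
  obtain ⟨S, hS, hST, hideal⟩ := hstar T hT
  rw [inter_eq_left.mpr (branches_mono hST)] at hideal
  exact not_pIdeal_branches hP hS hideal
end
end
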